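/- arXiv:2006.07663 — 3 statements merged into one kernel-verified Lean document; each statement's English description precedes it below -/
import Mathlib

section
/- Let P be an orthogonal projection matrix on ℝⁿ, R an n×q matrix with Rᵀ P R invertible, y ∈ ℝⁿ, σ² > 0, and define θ̂ = (Rᵀ P R)⁻¹ Rᵀ P y. Then the Gaussian integral over ℝ^q satisfies ∫ exp{−‖P(y − Rθ)‖²/(2σ²)} dθ = (2πσ²)^{q/2} |Rᵀ P R|^{−1/2} exp{−‖P(y − Rθ̂)‖²/(2σ²)}. In particular the integral is finite. -/
/-!
Since `P (y - R θ) = P y - (P R) θ` and `(P R)ᵀ (P R) = Rᵀ P R`, this is the Gaussian integral of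
an ordinary least-squares residual `z - W θ`. Around a solution `θ̂` of the normal equations
`Wᵀ (z - W θ̂) = 0` the residual splits orthogonally, so that
`‖z - W θ‖² = ‖z - W θ̂‖² + (θ - θ̂)ᵀ (Wᵀ W) (θ - θ̂)`. Writing the positive semidefinite matrix
`Wᵀ W = Bᵀ B` with `B` square, the substitution `x = B (θ - θ̂)` turns the remaining integral
into the standard Gaussian on `ℝ^q`, with Jacobian `|det B|⁻¹ = det (Wᵀ W) ^ (-1/2)`.
-/

open Matrix MeasureTheory Real

section ChangeOfVariables

variable {ι : Type*} [Fintype ι] [DecidableEq ι] {M : Matrix ι ι ℝ}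

theorem measurableEmbedding_mulVec (hM : M.det ≠ 0) : MeasurableEmbedding (M *ᵥ ·) :=
  ((M.toLinearEquiv' (invertibleOfIsUnitDet M hM.isUnit)).toContinuousLinearEquiv
    |>.toHomeomorph.measurableEmbedding)

theorem map_mulVec_volume (hM : M.det ≠ 0) :
    Measure.map (M *ᵥ ·) volume = ENNReal.ofReal |M.det|⁻¹ • volume := by
  rw [← abs_inv]
  exact Real.map_matrix_volume_pi_eq_smul_volume_pi hM

variable {E : Type*} [NormedAddCommGroup E]

theorem integrable_comp_mulVec_iff (hM : M.det ≠ 0) {f : (ι → ℝ) → E} :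
    Integrable (fun x => f (M *ᵥ x)) ↔ Integrable f := by
  have hc : ENNReal.ofReal |M.det|⁻¹ ≠ 0 := by
    simpa using abs_pos.mpr hM
  rw [← Function.comp_def, ← (measurableEmbedding_mulVec hM).integrable_map_iff,
    map_mulVec_volume hM, integrable_smul_measure hc ENNReal.ofReal_ne_top]

theorem integral_comp_mulVec [NormedSpace ℝ E] (hM : M.det ≠ 0) (f : (ι → ℝ) → E) :
    ∫ x, f (M *ᵥ x) = |M.det|⁻¹ • ∫ x, f x := by
  rw [← (measurableEmbedding_mulVec hM).integral_map, map_mulVec_volume hM,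
    integral_smul_measure, ENNReal.toReal_ofReal (by positivity)]

end ChangeOfVariables

theorem Matrix.dotProduct_transpose_mul_mulVec {α m n : Type*} [CommRing α] [Fintype m]
    [Fintype n] (B : Matrix m n α) (x : n → α) :
    x ⬝ᵥ ((Bᵀ * B) *ᵥ x) = (B *ᵥ x) ⬝ᵥ (B *ᵥ x) := by
  rw [← mulVec_mulVec, dotProduct_mulVec, vecMul_transpose]

theorem Matrix.posSemidef_transpose_mul_self {m n : Type*} [Fintype m] [Fintype n]
    (W : Matrix m n ℝ) : (Wᵀ * W).PosSemidef := by
  simpa using posSemidef_conjTranspose_mul_self W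

open scoped MatrixOrder in
theorem Matrix.PosSemidef.exists_eq_transpose_mul_self {n : Type*} [Fintype n]
    {A : Matrix n n ℝ} (hA : A.PosSemidef) : ∃ B : Matrix n n ℝ, A = Bᵀ * B := by
  classical
  obtain ⟨B, rfl⟩ := CStarAlgebra.nonneg_iff_eq_star_mul_self.mp hA.nonneg
  exact ⟨B, by rw [star_eq_conjTranspose, conjTranspose_eq_transpose_of_trivial]⟩

section Gaussian

variable {ι : Type*} [Fintype ι] {σ2 : ℝ}

theorem exp_neg_dotProduct_self_div_eq_prod (σ2 : ℝ) (x : ι → ℝ) :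
    exp (-(x ⬝ᵥ x) / (2 * σ2)) = ∏ i, exp (-(2 * σ2)⁻¹ * x i ^ 2) := by
  rw [← exp_sum, dotProduct, ← Finset.sum_neg_distrib, Finset.sum_div, Finset.sum_congr rfl]
  intro i _
  ring

theorem integrable_exp_neg_dotProduct_self_div (hσ2 : 0 < σ2) :
    Integrable (fun x : ι → ℝ => exp (-(x ⬝ᵥ x) / (2 * σ2))) := by
  simp_rw [exp_neg_dotProduct_self_div_eq_prod]
  exact Integrable.fintype_prod fun _ => integrable_exp_neg_mul_sq (by positivity)

theorem integral_exp_neg_dotProduct_self_div (hσ2 : 0 < σ2) :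
    ∫ x : ι → ℝ, exp (-(x ⬝ᵥ x) / (2 * σ2)) = (2 * π * σ2) ^ ((Fintype.card ι : ℝ) / 2) := by
  simp_rw [exp_neg_dotProduct_self_div_eq_prod]
  rw [volume_pi, integral_fintype_prod_eq_pow (fun t : ℝ => exp (-(2 * σ2)⁻¹ * t ^ 2)),
    integral_gaussian, div_inv_eq_mul, sqrt_eq_rpow, ← rpow_natCast, ← rpow_mul (by positivity)]
  ring_nf

variable [DecidableEq ι]

theorem integrable_exp_neg_mulVec_dotProduct_self_div {B : Matrix ι ι ℝ} (hB : B.det ≠ 0)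
    (hσ2 : 0 < σ2) : Integrable (fun x => exp (-((B *ᵥ x) ⬝ᵥ (B *ᵥ x)) / (2 * σ2))) :=
  (integrable_comp_mulVec_iff hB).mpr (integrable_exp_neg_dotProduct_self_div hσ2)

theorem integral_exp_neg_mulVec_dotProduct_self_div {B : Matrix ι ι ℝ} (hB : B.det ≠ 0)
    (hσ2 : 0 < σ2) : ∫ x, exp (-((B *ᵥ x) ⬝ᵥ (B *ᵥ x)) / (2 * σ2)) =
      (2 * π * σ2) ^ ((Fintype.card ι : ℝ) / 2) * |B.det|⁻¹ := by
  rw [integral_comp_mulVec hB (fun x => exp (-(x ⬝ᵥ x) / (2 * σ2))),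
    integral_exp_neg_dotProduct_self_div hσ2, smul_eq_mul, mul_comm]

theorem integrable_exp_neg_dotProduct_mulVec_div {A : Matrix ι ι ℝ} (hA : A.PosSemidef)
    (hdet : A.det ≠ 0) (hσ2 : 0 < σ2) (m : ι → ℝ) :
    Integrable (fun x => exp (-((x - m) ⬝ᵥ (A *ᵥ (x - m))) / (2 * σ2))) := by
  obtain ⟨B, rfl⟩ := hA.exists_eq_transpose_mul_self
  have hB : B.det ≠ 0 := by simpa [det_mul] using hdet
  simp_rw [dotProduct_transpose_mul_mulVec]
  exact (integrable_exp_neg_mulVec_dotProduct_self_div hB hσ2).comp_sub_right m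

theorem integral_exp_neg_dotProduct_mulVec_div {A : Matrix ι ι ℝ} (hA : A.PosSemidef)
    (hdet : A.det ≠ 0) (hσ2 : 0 < σ2) (m : ι → ℝ) :
    ∫ x, exp (-((x - m) ⬝ᵥ (A *ᵥ (x - m))) / (2 * σ2)) =
      (2 * π * σ2) ^ ((Fintype.card ι : ℝ) / 2) * A.det ^ (-(1 : ℝ) / 2) := by
  obtain ⟨B, rfl⟩ := hA.exists_eq_transpose_mul_self
  have hB : B.det ≠ 0 := by simpa [det_mul] using hdet
  have hdetB : (Bᵀ * B).det ^ (-(1 : ℝ) / 2) = |B.det|⁻¹ := by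
    rw [det_mul, det_transpose, ← sq, ← sq_abs, neg_div, rpow_neg (sq_nonneg _),
      ← sqrt_eq_rpow, sqrt_sq (abs_nonneg _)]
  simp_rw [dotProduct_transpose_mul_mulVec]
  rw [integral_sub_right_eq_self (fun x => exp (-((B *ᵥ x) ⬝ᵥ (B *ᵥ x)) / (2 * σ2))) m,
    integral_exp_neg_mulVec_dotProduct_self_div hB hσ2, hdetB]

end Gaussian

section LeastSquares

variable {α ι κ : Type*} [CommRing α] [Fintype ι] [Fintype κ]

theorem Matrix.transpose_mulVec_sub_mulVec_nonsing_inv_eq_zero [DecidableEq κ] (W : Matrix ι κ α)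
    (hW : IsUnit (Wᵀ * W).det) (z : ι → α) :
    Wᵀ *ᵥ (z - W *ᵥ ((Wᵀ * W)⁻¹ *ᵥ (Wᵀ *ᵥ z))) = 0 := by
  rw [mulVec_sub, mulVec_mulVec, mulVec_mulVec, mul_nonsing_inv _ hW, one_mulVec, sub_self]

theorem Matrix.dotProduct_self_sub_mulVec_of_transpose_mulVec_eq_zero (W : Matrix ι κ α)
    (z : ι → α) {θ₀ : κ → α} (hθ₀ : Wᵀ *ᵥ (z - W *ᵥ θ₀) = 0) (θ : κ → α) :
    (z - W *ᵥ θ) ⬝ᵥ (z - W *ᵥ θ) =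
      (z - W *ᵥ θ₀) ⬝ᵥ (z - W *ᵥ θ₀) + (θ - θ₀) ⬝ᵥ ((Wᵀ * W) *ᵥ (θ - θ₀)) := by
  have hcross : (z - W *ᵥ θ₀) ⬝ᵥ (W *ᵥ (θ - θ₀)) = 0 := by
    rw [dotProduct_mulVec, ← mulVec_transpose, hθ₀, zero_dotProduct]
  have hsplit : z - W *ᵥ θ = (z - W *ᵥ θ₀) - W *ᵥ (θ - θ₀) := by
    rw [mulVec_sub]; abel
  rw [hsplit, dotProduct_transpose_mul_mulVec]
  set r := z - W *ᵥ θ₀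
  set v := W *ᵥ (θ - θ₀)
  clear_value r v
  rw [sub_dotProduct, dotProduct_sub, dotProduct_sub, dotProduct_comm v r, hcross]
  ring

end LeastSquares

section GaussianLeastSquares

variable {ι κ : Type*} [Fintype ι] [Fintype κ]

theorem exp_neg_dotProduct_self_sub_mulVec_div_eq {W : Matrix ι κ ℝ} (z : ι → ℝ) {θ₀ : κ → ℝ}
    (hθ₀ : Wᵀ *ᵥ (z - W *ᵥ θ₀) = 0) (σ2 : ℝ) :
    (fun θ => exp (-((z - W *ᵥ θ) ⬝ᵥ (z - W *ᵥ θ)) / (2 * σ2))) = fun θ =>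
      exp (-((z - W *ᵥ θ₀) ⬝ᵥ (z - W *ᵥ θ₀)) / (2 * σ2)) *
        exp (-((θ - θ₀) ⬝ᵥ ((Wᵀ * W) *ᵥ (θ - θ₀))) / (2 * σ2)) := by
  ext θ
  rw [dotProduct_self_sub_mulVec_of_transpose_mulVec_eq_zero W z hθ₀, neg_add, add_div, exp_add]

variable [DecidableEq κ]

theorem integrable_exp_neg_dotProduct_self_sub_mulVec_div {W : Matrix ι κ ℝ}
    (hW : (Wᵀ * W).det ≠ 0) (z : ι → ℝ) {θ₀ : κ → ℝ} (hθ₀ : Wᵀ *ᵥ (z - W *ᵥ θ₀) = 0)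
    {σ2 : ℝ} (hσ2 : 0 < σ2) :
    Integrable (fun θ => exp (-((z - W *ᵥ θ) ⬝ᵥ (z - W *ᵥ θ)) / (2 * σ2))) := by
  rw [exp_neg_dotProduct_self_sub_mulVec_div_eq z hθ₀]
  exact (integrable_exp_neg_dotProduct_mulVec_div (posSemidef_transpose_mul_self W) hW hσ2
    θ₀).const_mul _

theorem integral_exp_neg_dotProduct_self_sub_mulVec_div {W : Matrix ι κ ℝ}
    (hW : (Wᵀ * W).det ≠ 0) (z : ι → ℝ) {θ₀ : κ → ℝ} (hθ₀ : Wᵀ *ᵥ (z - W *ᵥ θ₀) = 0)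
    {σ2 : ℝ} (hσ2 : 0 < σ2) :
    ∫ θ, exp (-((z - W *ᵥ θ) ⬝ᵥ (z - W *ᵥ θ)) / (2 * σ2)) =
      (2 * π * σ2) ^ ((Fintype.card κ : ℝ) / 2) * (Wᵀ * W).det ^ (-(1 : ℝ) / 2) *
        exp (-((z - W *ᵥ θ₀) ⬝ᵥ (z - W *ᵥ θ₀)) / (2 * σ2)) := by
  rw [exp_neg_dotProduct_self_sub_mulVec_div_eq z hθ₀, integral_const_mul,
    integral_exp_neg_dotProduct_mulVec_div (posSemidef_transpose_mul_self W) hW hσ2 θ₀, mul_comm]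

end GaussianLeastSquares

theorem stmt2 (n q : ℕ) (P : Matrix (Fin n) (Fin n) ℝ)
    (hPsymm : Pᵀ = P) (hPidem : P * P = P)
    (R : Matrix (Fin n) (Fin q) ℝ) (hinv : IsUnit (Rᵀ * P * R))
    (y : Fin n → ℝ) (σ2 : ℝ) (hσ2 : 0 < σ2)
    (θhat : Fin q → ℝ) (hθhat : θhat = (Rᵀ * P * R)⁻¹ *ᵥ (Rᵀ *ᵥ (P *ᵥ y))) :
    (∫ θ : Fin q → ℝ,
        Real.exp (-((P *ᵥ (y - R *ᵥ θ)) ⬝ᵥ (P *ᵥ (y - R *ᵥ θ))) / (2 * σ2))) =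
      (2 * π * σ2) ^ ((q : ℝ) / 2) * (Rᵀ * P * R).det ^ (-(1 : ℝ) / 2) *
        Real.exp (-((P *ᵥ (y - R *ᵥ θhat)) ⬝ᵥ (P *ᵥ (y - R *ᵥ θhat))) / (2 * σ2)) ∧
    Integrable (fun θ : Fin q → ℝ =>
        Real.exp (-((P *ᵥ (y - R *ᵥ θ)) ⬝ᵥ (P *ᵥ (y - R *ᵥ θ))) / (2 * σ2))) := by
  have hres (θ : Fin q → ℝ) : P *ᵥ (y - R *ᵥ θ) = P *ᵥ y - (P * R) *ᵥ θ := by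
    rw [mulVec_sub, mulVec_mulVec]
  have hgram : Rᵀ * P * R = (P * R)ᵀ * (P * R) := by
    simp only [transpose_mul, hPsymm, Matrix.mul_assoc]
    rw [← Matrix.mul_assoc P P R, hPidem]
  have hdet : IsUnit ((P * R)ᵀ * (P * R)).det := (isUnit_iff_isUnit_det _).mp (hgram ▸ hinv)
  have hnormal : (P * R)ᵀ *ᵥ (P *ᵥ y - (P * R) *ᵥ θhat) = 0 := by
    have hPy : (P * R)ᵀ *ᵥ (P *ᵥ y) = Rᵀ *ᵥ (P *ᵥ y) := by
      rw [transpose_mul, hPsymm, ← mulVec_mulVec, mulVec_mulVec y P P, hPidem]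
    rw [hθhat, hgram, ← hPy]
    exact transpose_mulVec_sub_mulVec_nonsing_inv_eq_zero _ hdet _
  simp_rw [hres, hgram]
  exact ⟨by simpa using integral_exp_neg_dotProduct_self_sub_mulVec_div hdet.ne_zero _ hnormal hσ2,
    integrable_exp_neg_dotProduct_self_sub_mulVec_div hdet.ne_zero _ hnormal hσ2⟩
end

section
/- Nested least squares identity: Let P be an orthogonal projection on ℝⁿ, R = [R₁ R₂] ∈ ℝ^{n×(q+m)} with Rᵀ P R invertible, y ∈ ℝⁿ, θ̂ = (Rᵀ P R)⁻¹ Rᵀ P y, and write θ̂ = (θ̂₁ᵀ, θ̂₂ᵀ)ᵀ. If θ̂₂ = 0 then the minimizer of θ ↦ ‖P(y − R₁θ)‖² over ℝ^q equals θ̂₁ and the minimum values of the full and restricted problems coincide: min_θ ‖P(y − Rθ)‖² = min_{θ₁} ‖P(y − R₁θ₁)‖². -/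
open Matrix

theorem stmt14 (n q m : ℕ) (P : Matrix (Fin n) (Fin n) ℝ)
    (hPsymm : Pᵀ = P) (hPidem : P * P = P)
    (R1 : Matrix (Fin n) (Fin q) ℝ) (R2 : Matrix (Fin n) (Fin m) ℝ)
    (R : Matrix (Fin n) (Fin q ⊕ Fin m) ℝ)
    (hR : ∀ i j, R i (Sum.inl j) = R1 i j) (hR2 : ∀ i j, R i (Sum.inr j) = R2 i j)
    (hposdef : (Rᵀ * P * R).PosDef)
    (y : Fin n → ℝ)
    (θhat : Fin q ⊕ Fin m → ℝ) (hθhat : θhat = (Rᵀ * P * R)⁻¹ *ᵥ (Rᵀ *ᵥ (P *ᵥ y)))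
    (hzero : ∀ j : Fin m, θhat (Sum.inr j) = 0) :
    (∀ θ1 : Fin q → ℝ,
      (P *ᵥ (y - R1 *ᵥ (fun j => θhat (Sum.inl j)))) ⬝ᵥ
          (P *ᵥ (y - R1 *ᵥ (fun j => θhat (Sum.inl j)))) ≤
        (P *ᵥ (y - R1 *ᵥ θ1)) ⬝ᵥ (P *ᵥ (y - R1 *ᵥ θ1))) ∧
    (P *ᵥ (y - R1 *ᵥ (fun j => θhat (Sum.inl j)))) ⬝ᵥ
        (P *ᵥ (y - R1 *ᵥ (fun j => θhat (Sum.inl j)))) =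
      (P *ᵥ (y - R *ᵥ θhat)) ⬝ᵥ (P *ᵥ (y - R *ᵥ θhat)) := by
  set θ1hat : Fin q → ℝ := fun j => θhat (Sum.inl j) with hθ1hat
  -- R *ᵥ θhat = R1 *ᵥ θ1hat
  have hRe : R *ᵥ θhat = R1 *ᵥ θ1hat := by
    funext i
    simp only [mulVec, dotProduct, Fintype.sum_sum_type]
    simp [hR, hR2, hzero, hθ1hat]
  -- normal equations
  have hunit : IsUnit (Rᵀ * P * R).det := isUnit_iff_ne_zero.mpr (ne_of_gt hposdef.det_pos)
  have hnormal : (Rᵀ * P * R) *ᵥ θhat = Rᵀ *ᵥ (P *ᵥ y) := by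
    rw [hθhat, mulVec_mulVec, Matrix.mul_nonsing_inv _ hunit, one_mulVec]
  have hresid : Rᵀ *ᵥ (P *ᵥ (y - R *ᵥ θhat)) = 0 := by
    have h : Rᵀ *ᵥ (P *ᵥ (R *ᵥ θhat)) = Rᵀ *ᵥ (P *ᵥ y) := by
      rw [← hnormal]; simp [mulVec_mulVec, Matrix.mul_assoc]
    rw [mulVec_sub, mulVec_sub, h, sub_self]
  -- R1ᵀ version
  have hresid1 : R1ᵀ *ᵥ (P *ᵥ (y - R *ᵥ θhat)) = 0 := by
    funext j
    have h := congrFun hresid (Sum.inl j)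
    simpa only [mulVec, dotProduct, transpose_apply, hR, Pi.zero_apply] using h
  -- shortcut: P *ᵥ (P *ᵥ v) = P *ᵥ v
  have hPP : ∀ v : Fin n → ℝ, P *ᵥ (P *ᵥ v) = P *ᵥ v := by
    intro v; rw [mulVec_mulVec, hPidem]
  -- cross term vanishes
  have key : ∀ d : Fin q → ℝ,
      (P *ᵥ (y - R1 *ᵥ θ1hat)) ⬝ᵥ (P *ᵥ (R1 *ᵥ d)) = 0 := by
    intro d
    have h1 : (P *ᵥ (y - R1 *ᵥ θ1hat)) ⬝ᵥ (P *ᵥ (R1 *ᵥ d))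
        = (P *ᵥ (y - R1 *ᵥ θ1hat)) ⬝ᵥ (R1 *ᵥ d) := by
      rw [dotProduct_mulVec, ← mulVec_transpose, hPsymm, hPP]
    rw [h1, dotProduct_mulVec, ← mulVec_transpose, ← hRe, hresid1, zero_dotProduct]
  constructor
  · intro θ1
    have hdecomp : y - R1 *ᵥ θ1 = (y - R1 *ᵥ θ1hat) + R1 *ᵥ (θ1hat - θ1) := by
      rw [mulVec_sub]; abel
    set a := P *ᵥ (y - R1 *ᵥ θ1hat) with ha
    set b := P *ᵥ (R1 *ᵥ (θ1hat - θ1)) with hb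
    have hsum : P *ᵥ (y - R1 *ᵥ θ1) = a + b := by rw [hdecomp, mulVec_add]
    rw [hsum]
    have hcross : a ⬝ᵥ b = 0 := key _
    have hcross' : b ⬝ᵥ a = 0 := by rw [dotProduct_comm]; exact hcross
    have hbb : 0 ≤ b ⬝ᵥ b := Finset.sum_nonneg fun i _ => mul_self_nonneg _
    have : (a + b) ⬝ᵥ (a + b) = a ⬝ᵥ a + b ⬝ᵥ b := by
      rw [add_dotProduct, dotProduct_add, dotProduct_add, hcross, hcross']; ring
    rw [this]; linarith
  · rw [hRe]
end

section
/- Oracle equivalence of conditional posterior: Let Z ∈ ℝ^{n×p} have full column rank, P_Z the projection onto its column space, d ∈ ℝⁿ, d̂ = P_Z d, and Z_ω a sub-matrix of Z with M = I − Z_ω(Z_ωᵀZ_ω)⁻¹Z_ωᵀ; assume d̂ᵀ M d̂ ≠ 0 and R_ω = [d, Z_ω] with R_ωᵀ P_Z R_ω invertible. Then the first coordinate of θ̂ = (R_ωᵀ P_Z R_ω)⁻¹ R_ωᵀ P_Z y equals (d̂ᵀ M d̂)⁻¹ d̂ᵀ M y, i.e., the posterior mean of β equals the oracle two-stage least squares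 estimator. -/
open Matrix

lemma aux_mulVec_inj {n m : ℕ} (A : Matrix (Fin n) (Fin m) ℝ) (hA : A.rank = m) :
    Function.Injective A.mulVec := by
  rw [← Matrix.coe_mulVecLin]
  rw [← LinearMap.ker_eq_bot]
  have h1 := A.mulVecLin.finrank_range_add_finrank_ker
  rw [show Module.finrank ℝ (LinearMap.range A.mulVecLin) = m from hA,
    Module.finrank_pi, Fintype.card_fin] at h1
  have : Module.finrank ℝ (LinearMap.ker A.mulVecLin) = 0 := by omega
  exact Submodule.finrank_eq_zero.mp this

lemma aux_isUnit {n m : ℕ} (A : Matrix (Fin n) (Fin m) ℝ) (hA : A.rank = m) :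
    IsUnit (Aᵀ * A) := by
  rw [← Matrix.mulVec_injective_iff_isUnit]
  have hinj := aux_mulVec_inj A hA
  intro x x' hxx
  apply hinj
  have h0 : (Aᵀ * A) *ᵥ (x - x') = 0 := by
    rw [Matrix.mulVec_sub, hxx, sub_self]
  have h1 : (A *ᵥ (x - x')) ⬝ᵥ (A *ᵥ (x - x')) = 0 := by
    have h3 : (x - x') ⬝ᵥ ((Aᵀ * A) *ᵥ (x - x')) = 0 := by rw [h0, dotProduct_zero]
    rwa [← Matrix.mulVec_mulVec, Matrix.dotProduct_mulVec, Matrix.vecMul_transpose] at h3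
  have h2 : A *ᵥ (x - x') = 0 := by
    ext i
    have := Finset.sum_eq_zero_iff_of_nonneg (fun i _ => mul_self_nonneg ((A *ᵥ (x - x')) i)) |>.mp h1
    simpa using mul_self_eq_zero.mp (this i (Finset.mem_univ i))
  rw [Matrix.mulVec_sub, sub_eq_zero] at h2
  exact h2

lemma aux_dot_symm {n : ℕ} (A : Matrix (Fin n) (Fin n) ℝ) (hA : Aᵀ = A)
    (x v : Fin n → ℝ) : x ⬝ᵥ (A *ᵥ v) = (A *ᵥ x) ⬝ᵥ v := by
  rw [Matrix.dotProduct_mulVec, show x ᵥ* A = A *ᵥ x from by rw [← Matrix.vecMul_transpose, hA]]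

theorem stmt19 (n p k : ℕ) (Z : Matrix (Fin n) (Fin p) ℝ) (hZ : Z.rank = p)
    (PZ : Matrix (Fin n) (Fin n) ℝ) (hPZ : PZ = Z * (Zᵀ * Z)⁻¹ * Zᵀ)
    (Zω : Matrix (Fin n) (Fin k) ℝ)
    (hsub : ∃ f : Fin k → Fin p, Function.Injective f ∧ ∀ i j, Zω i j = Z i (f j))
    (hZω : Zω.rank = k)
    (d y : Fin n → ℝ) (dhat : Fin n → ℝ) (hdhat : dhat = PZ *ᵥ d)
    (M : Matrix (Fin n) (Fin n) ℝ) (hM : M = 1 - Zω * (Zωᵀ * Zω)⁻¹ * Zωᵀ)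
    (hden : dhat ⬝ᵥ (M *ᵥ dhat) ≠ 0)
    (R : Matrix (Fin n) (Unit ⊕ Fin k) ℝ)
    (hR1 : ∀ i, R i (Sum.inl ()) = d i) (hR2 : ∀ i j, R i (Sum.inr j) = Zω i j)
    (hinv : IsUnit (Rᵀ * PZ * R))
    (θhat : Unit ⊕ Fin k → ℝ) (hθhat : θhat = (Rᵀ * PZ * R)⁻¹ *ᵥ (Rᵀ *ᵥ (PZ *ᵥ y))) :
    θhat (Sum.inl ()) = (dhat ⬝ᵥ (M *ᵥ dhat))⁻¹ * (dhat ⬝ᵥ (M *ᵥ y)) := by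
  obtain ⟨f, hf, hZωf⟩ := hsub
  have hZZd : IsUnit (Zᵀ * Z).det := (Matrix.isUnit_iff_isUnit_det _).mp (aux_isUnit Z hZ)
  have hWWd : IsUnit (Zωᵀ * Zω).det := (Matrix.isUnit_iff_isUnit_det _).mp (aux_isUnit Zω hZω)
  -- PZ basic facts
  have hPZZ : PZ * Z = Z := by
    rw [hPZ, Matrix.mul_assoc (Z * (Zᵀ * Z)⁻¹), Matrix.mul_assoc Z,
      Matrix.nonsing_inv_mul _ hZZd, Matrix.mul_one]
  have hPZT : PZᵀ = PZ := by
    rw [hPZ, Matrix.transpose_mul, Matrix.transpose_mul, Matrix.transpose_transpose,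
      Matrix.transpose_nonsing_inv, Matrix.transpose_mul, Matrix.transpose_transpose,
      Matrix.mul_assoc]
  have hPZ2 : PZ * PZ = PZ := by
    nth_rewrite 2 [hPZ]
    rw [← Matrix.mul_assoc, ← Matrix.mul_assoc, hPZZ, ← hPZ]
  -- Zω ⊆ Z columns
  have hZωS : Zω = Z * (1 : Matrix (Fin p) (Fin p) ℝ).submatrix (Equiv.refl (Fin p)) f := by
    rw [Matrix.mul_submatrix_one]
    ext i j
    simp [hZωf]
  have hPZω : PZ * Zω = Zω := by
    rw [hZωS, ← Matrix.mul_assoc, hPZZ]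
  -- M facts
  have hMT : Mᵀ = M := by
    rw [hM, Matrix.transpose_sub, Matrix.transpose_one, Matrix.transpose_mul,
      Matrix.transpose_mul, Matrix.transpose_transpose, Matrix.transpose_nonsing_inv,
      Matrix.transpose_mul, Matrix.transpose_transpose, Matrix.mul_assoc]
  have hZωM : Zωᵀ * M = 0 := by
    rw [hM, Matrix.mul_sub, Matrix.mul_one]
    rw [← Matrix.mul_assoc, ← Matrix.mul_assoc, Matrix.mul_nonsing_inv _ hWWd,
      Matrix.one_mul, sub_self]
  have hPZM : PZ * (Zω * (Zωᵀ * Zω)⁻¹ * Zωᵀ) = Zω * (Zωᵀ * Zω)⁻¹ * Zωᵀ := by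
    rw [← Matrix.mul_assoc, ← Matrix.mul_assoc, hPZω]
  -- the explicit solution
  set β : ℝ := (dhat ⬝ᵥ (M *ᵥ dhat))⁻¹ * (dhat ⬝ᵥ (M *ᵥ y)) with hβ
  set u : Fin n → ℝ := PZ *ᵥ y - β • dhat with hu
  set α : Fin k → ℝ := (Zωᵀ * Zω)⁻¹ *ᵥ (Zωᵀ *ᵥ u) with hα
  set w : Fin n → ℝ := u - Zω *ᵥ α with hw
  set θ : Unit ⊕ Fin k → ℝ := Sum.elim (fun _ => β) α with hθ
  have hwM : w = M *ᵥ u := by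
    rw [hw, hα, Matrix.mulVec_mulVec, Matrix.mulVec_mulVec, hM, Matrix.sub_mulVec,
      Matrix.one_mulVec, Matrix.mul_assoc]
  have hZωw : Zωᵀ *ᵥ w = 0 := by
    rw [hwM, Matrix.mulVec_mulVec, hZωM, Matrix.zero_mulVec]
  have hPZdhat : PZ *ᵥ dhat = dhat := by
    rw [hdhat, Matrix.mulVec_mulVec, hPZ2]
  have hPZu : PZ *ᵥ u = u := by
    rw [hu, Matrix.mulVec_sub, Matrix.mulVec_smul, Matrix.mulVec_mulVec, hPZ2, hPZdhat]
  have hPZw : PZ *ᵥ w = w := by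
    rw [hw, Matrix.mulVec_sub, hPZu, Matrix.mulVec_mulVec, hPZω]
  -- dhat ⬝ᵥ w = 0
  have hMdhatPZ : PZ *ᵥ (M *ᵥ dhat) = M *ᵥ dhat := by
    rw [hM, Matrix.sub_mulVec, Matrix.one_mulVec, Matrix.mulVec_sub, hPZdhat,
      Matrix.mulVec_mulVec, hPZM]
  have hdhatw : dhat ⬝ᵥ w = 0 := by
    rw [hwM, aux_dot_symm M hMT, hu, dotProduct_sub]
    have e1 : (M *ᵥ dhat) ⬝ᵥ (PZ *ᵥ y) = dhat ⬝ᵥ (M *ᵥ y) := by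
      rw [aux_dot_symm PZ hPZT, hMdhatPZ, ← aux_dot_symm M hMT]
    have e2 : (M *ᵥ dhat) ⬝ᵥ (β • dhat) = dhat ⬝ᵥ (M *ᵥ y) := by
      rw [dotProduct_smul, dotProduct_comm, hβ, smul_eq_mul]
      field_simp
    rw [e1, e2, sub_self]
  have hdw : d ⬝ᵥ w = 0 := by
    have : d ⬝ᵥ w = dhat ⬝ᵥ w := by
      rw [← hPZw, Matrix.dotProduct_mulVec, ← hPZT, Matrix.vecMul_transpose, ← hdhat, hPZT, hPZw]
    rw [this, hdhatw]
  -- Rᵀ *ᵥ w = 0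
  have hRw : Rᵀ *ᵥ w = 0 := by
    ext j
    cases j with
    | inl j' =>
      have : (Rᵀ *ᵥ w) (Sum.inl j') = d ⬝ᵥ w := by
        cases j'
        simp [Matrix.mulVec, dotProduct, hR1]
      rw [this, hdw]; rfl
    | inr j' =>
      have : (Rᵀ *ᵥ w) (Sum.inr j') = (Zωᵀ *ᵥ w) j' := by
        simp [Matrix.mulVec, dotProduct, hR2]
      rw [this, hZωw]; rfl
  -- R *ᵥ θ
  have hRθ : R *ᵥ θ = β • d + Zω *ᵥ α := by
    ext i
    simp only [Matrix.mulVec, dotProduct, hθ, Fintype.sum_sum_type,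
      Finset.univ_unique, Finset.sum_singleton, Sum.elim_inl, Sum.elim_inr,
      Pi.add_apply, Pi.smul_apply, smul_eq_mul]
    rw [hR1]
    congr 1
    · ring
    · exact Finset.sum_congr rfl fun j _ => by rw [hR2]
  have hkey : (Rᵀ * PZ * R) *ᵥ θ = Rᵀ *ᵥ (PZ *ᵥ y) := by
    have h1 : (Rᵀ * PZ * R) *ᵥ θ = Rᵀ *ᵥ (PZ *ᵥ (R *ᵥ θ)) := by
      rw [Matrix.mulVec_mulVec, Matrix.mulVec_mulVec, Matrix.mul_assoc]
    have h2 : PZ *ᵥ (R *ᵥ θ) = β • dhat + Zω *ᵥ α := by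
      rw [hRθ, Matrix.mulVec_add, Matrix.mulVec_smul, ← hdhat, Matrix.mulVec_mulVec, hPZω]
    have h3 : PZ *ᵥ y - (β • dhat + Zω *ᵥ α) = w := by
      rw [hw, hu]; abel
    have h4 : Rᵀ *ᵥ (PZ *ᵥ y) - Rᵀ *ᵥ (β • dhat + Zω *ᵥ α) = 0 := by
      rw [← Matrix.mulVec_sub, h3, hRw]
    rw [h1, h2, sub_eq_zero.mp h4]
  have hdet : IsUnit (Rᵀ * PZ * R).det := (Matrix.isUnit_iff_isUnit_det _).mp hinv
  have hθeq : θhat = θ := by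
    rw [hθhat, ← hkey, Matrix.mulVec_mulVec, Matrix.nonsing_inv_mul _ hdet, Matrix.one_mulVec]
  rw [hθeq, hθ]
  rfl
end
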